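/- Let Ψ, Ξ, Φ ∈ L²(Ω) and define the incoherent nonlinear map N_Φ[Ψ] := λ g_V[|2Ψ−Φ|² + |Φ|²] Ψ. Then ‖N_Φ[Ψ] − N_Φ[Ξ]‖_{L²} ≤ 8 ‖λ‖_{L^∞} ‖V‖_{L^∞(ℝ^d)} (‖Ψ‖²_{L²} + ‖Ξ‖²_{L²} + ‖Φ‖²_{L²}) ‖Ψ − Ξ‖_{L²}. -/

import Mathlib

open MeasureTheory Complex

/-- The nonlocal term `g_V[η](x) = ∫_Ω V(x-y) η(y) dy`. -/
noncomputable def gV {d : ℕ} (Ω : Set (EuclideanSpace ℝ (Fin d)))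
    (V : EuclideanSpace ℝ (Fin d) → ℂ) (η : EuclideanSpace ℝ (Fin d) → ℂ)
    (x : EuclideanSpace ℝ (Fin d)) : ℂ :=
  ∫ y in Ω, V (x - y) * η y

/-- The incoherent nonlinear map `N_Φ[Ψ] = λ g_V[|2Ψ−Φ|² + |Φ|²] Ψ`. -/
noncomputable def incoherentN {d : ℕ} (Ω : Set (EuclideanSpace ℝ (Fin d)))
    (lam V Φ Ψ : EuclideanSpace ℝ (Fin d) → ℂ)
    (x : EuclideanSpace ℝ (Fin d)) : ℂ :=
  lam x *
    gV Ω V (fun y => (((‖2 * Ψ y - Φ y‖ : ℝ) : ℂ) ^ 2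
      + ((‖Φ y‖ : ℝ) : ℂ) ^ 2)) x * Ψ x

/-! Write `ρ_Ψ = |2Ψ − Φ|² + |Φ|²`, so that `N_Φ[Ψ] − N_Φ[Ξ] = λ (g_V[ρ_Ψ] (Ψ − Ξ) + g_V[ρ_Ψ − ρ_Ξ] Ξ)`,
and `|g_V[η]| ≤ ‖V‖_∞ ‖η‖_{L¹}` pointwise. The triangle inequality gives
`‖ρ_Ψ‖_{L¹} ≤ (2‖Ψ‖₂ + ‖Φ‖₂)² + ‖Φ‖₂²`, while `||z|² − |w|²| ≤ (|z| + |w|) |z − w|` and Cauchy–Schwarz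
give `‖ρ_Ψ − ρ_Ξ‖_{L¹} ≤ 4 (‖Ψ‖₂ + ‖Ξ‖₂ + ‖Φ‖₂) ‖Ψ − Ξ‖₂`; AM–GM collects the constants into `8`.
In `ℝ≥0∞` the bound is trivial when its right side is `∞`, and when it is `0` one of `λ`, `V`,
`Ψ − Ξ` vanishes a.e. -/

open scoped ENNReal

section LpEstimates

variable {α E F : Type*} [MeasurableSpace α] {μ : Measure α}
  [NormedAddCommGroup E] [NormedAddCommGroup F] {p : ℝ≥0∞}

theorem eLpNorm_le_mul_eLpNorm_of_ae_enorm_le_mul {ε ε' : Type*} [TopologicalSpace ε]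
    [ESeminormedAddMonoid ε] [TopologicalSpace ε'] [ContinuousENorm ε'] {f : α → ε} {g : α → ε'}
    {c : ℝ≥0∞} (hg : AEStronglyMeasurable g μ) (h : ∀ᵐ x ∂μ, ‖f x‖ₑ ≤ c * ‖g x‖ₑ) :
    eLpNorm f p μ ≤ c * eLpNorm g p μ := by
  rcases eq_or_ne p 0 with rfl | hp0
  · simp
  rcases eq_or_ne p ∞ with rfl | hp_top
  · exact eLpNormEssSup_le_nnreal_smul_eLpNormEssSup_of_ae_le_mul' h
  simp_rw [eLpNorm_eq_eLpNorm' hp0 hp_top]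
  exact eLpNorm'_le_mul_eLpNorm'_of_ae_le_mul hg h (ENNReal.toReal_pos hp0 hp_top)

theorem eLpNorm_le_add_of_ae_enorm_le {f : α → E} {g₁ g₂ : α → F} {c₁ c₂ : ℝ≥0∞} (hp : 1 ≤ p)
    (hg₁ : AEStronglyMeasurable g₁ μ) (hg₂ : AEStronglyMeasurable g₂ μ)
    (h : ∀ᵐ x ∂μ, ‖f x‖ₑ ≤ c₁ * ‖g₁ x‖ₑ + c₂ * ‖g₂ x‖ₑ) :
    eLpNorm f p μ ≤ c₁ * eLpNorm g₁ p μ + c₂ * eLpNorm g₂ p μ := by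
  set G₁ : α → ℝ≥0∞ := fun x => c₁ * ‖g₁ x‖ₑ
  set G₂ : α → ℝ≥0∞ := fun x => c₂ * ‖g₂ x‖ₑ
  have hG₁ : eLpNorm G₁ p μ ≤ c₁ * eLpNorm g₁ p μ :=
    eLpNorm_le_mul_eLpNorm_of_ae_enorm_le_mul hg₁ (by simp [G₁])
  have hG₂ : eLpNorm G₂ p μ ≤ c₂ * eLpNorm g₂ p μ :=
    eLpNorm_le_mul_eLpNorm_of_ae_enorm_le_mul hg₂ (by simp [G₂])
  have hf : eLpNorm f p μ ≤ eLpNorm (G₁ + G₂) p μ :=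
    eLpNorm_mono_enorm_ae (by simpa only [Pi.add_apply, enorm_eq_self] using h)
  have hadd : eLpNorm (G₁ + G₂) p μ ≤ eLpNorm G₁ p μ + eLpNorm G₂ p μ :=
    eLpNorm_add_le (hg₁.enorm.const_mul c₁).aestronglyMeasurable
      (hg₂.enorm.const_mul c₂).aestronglyMeasurable hp
  exact hf.trans (hadd.trans (add_le_add hG₁ hG₂))

theorem eLpNorm_one_norm_sq (f : α → E) :
    eLpNorm (fun x => ‖f x‖ ^ 2) 1 μ = eLpNorm f 2 μ ^ 2 := by
  simpa using eLpNorm_norm_rpow (p := 1) (μ := μ) f (q := 2) two_pos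

theorem eLpNorm_one_norm_sq_sub_norm_sq_le {u v : α → E} (hu : AEStronglyMeasurable u μ)
    (hv : AEStronglyMeasurable v μ) :
    eLpNorm (fun x => ‖u x‖ ^ 2 - ‖v x‖ ^ 2) 1 μ
      ≤ (eLpNorm u 2 μ + eLpNorm v 2 μ) * eLpNorm (u - v) 2 μ := by
  have hpt (x : α) : ‖‖u x‖ ^ 2 - ‖v x‖ ^ 2‖ ≤ ‖(‖u x‖ + ‖v x‖) * ‖u x - v x‖‖ := by
    rw [Real.norm_eq_abs, Real.norm_eq_abs, sq_sub_sq, abs_mul, abs_mul, abs_norm,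
      abs_of_nonneg (by positivity : 0 ≤ ‖u x‖ + ‖v x‖)]
    gcongr
    exact abs_norm_sub_norm_le _ _
  calc eLpNorm (fun x => ‖u x‖ ^ 2 - ‖v x‖ ^ 2) 1 μ
      ≤ eLpNorm ((fun x => ‖u x‖ + ‖v x‖) • fun x => ‖u x - v x‖) 1 μ := eLpNorm_mono hpt
    _ ≤ eLpNorm (fun x => ‖u x‖ + ‖v x‖) 2 μ * eLpNorm (fun x => ‖u x - v x‖) 2 μ :=
        eLpNorm_smul_le_mul_eLpNorm (hu.sub hv).norm (hu.norm.add hv.norm)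
    _ ≤ (eLpNorm u 2 μ + eLpNorm v 2 μ) * eLpNorm (u - v) 2 μ := by
        rw [eLpNorm_norm (fun x => u x - v x)]
        refine mul_le_mul_left ?_ _
        refine (eLpNorm_add_le hu.norm hv.norm one_le_two).trans_eq ?_
        rw [eLpNorm_norm, eLpNorm_norm]

end LpEstimates

theorem two_mul_add_sq_add_sq_add_le (a b c : ℝ≥0∞) :
    (2 * a + c) ^ 2 + c ^ 2 + 4 * (a + b + c) * b ≤ 8 * (a ^ 2 + b ^ 2 + c ^ 2) := by
  rcases eq_or_ne a ∞ with rfl | ha; · simp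
  rcases eq_or_ne b ∞ with rfl | hb; · simp
  rcases eq_or_ne c ∞ with rfl | hc; · simp
  lift a to NNReal using ha
  lift b to NNReal using hb
  lift c to NNReal using hc
  norm_cast
  rw [← NNReal.coe_le_coe]
  push_cast
  nlinarith [sq_nonneg ((a : ℝ) - b), sq_nonneg ((a : ℝ) - c), sq_nonneg ((b : ℝ) - c)]

section NonlocalTerm

variable {d : ℕ} {Ω : Set (EuclideanSpace ℝ (Fin d))} {V η η' : EuclideanSpace ℝ (Fin d) → ℂ}

theorem ae_restrict_enorm_comp_sub_le (x : EuclideanSpace ℝ (Fin d)) :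
    ∀ᵐ y ∂volume.restrict Ω, ‖V (x - y)‖ₑ ≤ eLpNorm V ∞ volume :=
  ae_restrict_of_ae <| (Measure.measurePreserving_sub_left volume x).quasiMeasurePreserving.ae
    (by simpa only [eLpNorm_exponent_top] using ae_le_eLpNormEssSup (f := V))

theorem enorm_gV_le (hη : AEStronglyMeasurable η (volume.restrict Ω))
    (x : EuclideanSpace ℝ (Fin d)) :
    ‖gV Ω V η x‖ₑ ≤ eLpNorm V ∞ volume * eLpNorm η 1 (volume.restrict Ω) :=
  calc ‖gV Ω V η x‖ₑ ≤ ∫⁻ y in Ω, ‖V (x - y) * η y‖ₑ := enorm_integral_le_lintegral_enorm _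
    _ ≤ ∫⁻ y in Ω, eLpNorm V ∞ volume * ‖η y‖ₑ := by
        refine lintegral_mono_ae ?_
        filter_upwards [ae_restrict_enorm_comp_sub_le (V := V) x] with y hy
        rw [enorm_mul]
        exact mul_le_mul_left hy _
    _ = eLpNorm V ∞ volume * eLpNorm η 1 (volume.restrict Ω) := by
        rw [lintegral_const_mul'' _ hη.enorm, eLpNorm_one_eq_lintegral_enorm]

theorem integrable_comp_sub_mul (hV : MemLp V ∞ volume) (hη : Integrable η (volume.restrict Ω))
    (x : EuclideanSpace ℝ (Fin d)) :
    Integrable (fun y => V (x - y) * η y) (volume.restrict Ω) :=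
  hη.mul_of_top_right
    ((hV.comp_measurePreserving (Measure.measurePreserving_sub_left volume x)).restrict Ω)

theorem gV_sub (hV : MemLp V ∞ volume) (hη : Integrable η (volume.restrict Ω))
    (hη' : Integrable η' (volume.restrict Ω)) (x : EuclideanSpace ℝ (Fin d)) :
    gV Ω V η x - gV Ω V η' x = gV Ω V (η - η') x := by
  rw [gV, gV, gV, ← integral_sub (integrable_comp_sub_mul hV hη x)
    (integrable_comp_sub_mul hV hη' x)]
  simp only [Pi.sub_apply, mul_sub]

theorem gV_congr_ae (h : η =ᵐ[volume.restrict Ω] η') (x : EuclideanSpace ℝ (Fin d)) :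
    gV Ω V η x = gV Ω V η' x :=
  integral_congr_ae (h.mono fun y hy => by simp only [hy])

theorem gV_eq_zero_of_ae_eq_zero (hV : V =ᵐ[volume] 0) (x : EuclideanSpace ℝ (Fin d)) :
    gV Ω V η x = 0 := by
  refine integral_eq_zero_of_ae (ae_restrict_of_ae ?_)
  filter_upwards [(Measure.measurePreserving_sub_left volume x).quasiMeasurePreserving.ae_eq hV]
    with y hy
  simp [show V (x - y) = 0 from hy]

end NonlocalTerm

section IncoherentDensity

variable {α : Type*} {Φ Ψ Ξ : α → ℂ}

noncomputable def incoherentDensity (Φ Ψ : α → ℂ) (y : α) : ℂ :=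
  ((‖2 * Ψ y - Φ y‖ : ℝ) : ℂ) ^ 2 + ((‖Φ y‖ : ℝ) : ℂ) ^ 2

theorem incoherentDensity_apply (y : α) :
    incoherentDensity Φ Ψ y = ((‖2 * Ψ y - Φ y‖ ^ 2 + ‖Φ y‖ ^ 2 : ℝ) : ℂ) := by
  simp [incoherentDensity]

variable [MeasurableSpace α] {μ : Measure α}

theorem aestronglyMeasurable_incoherentDensity (hΦ : AEStronglyMeasurable Φ μ)
    (hΨ : AEStronglyMeasurable Ψ μ) : AEStronglyMeasurable (incoherentDensity Φ Ψ) μ := by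
  unfold incoherentDensity
  fun_prop

theorem eLpNorm_two_mul_sub_le {p : ℝ≥0∞} (hp : 1 ≤ p) (hΦ : AEStronglyMeasurable Φ μ)
    (hΨ : AEStronglyMeasurable Ψ μ) :
    eLpNorm (fun y => 2 * Ψ y - Φ y) p μ ≤ 2 * eLpNorm Ψ p μ + eLpNorm Φ p μ := by
  refine (eLpNorm_sub_le (f := (2 : ℂ) • Ψ) (hΨ.const_smul 2) hΦ hp).trans ?_
  rw [eLpNorm_const_smul, show ‖(2 : ℂ)‖ₑ = 2 by simp [enorm_eq_nnnorm]]

theorem eLpNorm_incoherentDensity_le (hΦ : AEStronglyMeasurable Φ μ)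
    (hΨ : AEStronglyMeasurable Ψ μ) :
    eLpNorm (incoherentDensity Φ Ψ) 1 μ
      ≤ (2 * eLpNorm Ψ 2 μ + eLpNorm Φ 2 μ) ^ 2 + eLpNorm Φ 2 μ ^ 2 := by
  have hu : AEStronglyMeasurable (fun y => 2 * Ψ y - Φ y) μ := (hΨ.const_mul 2).sub hΦ
  calc eLpNorm (incoherentDensity Φ Ψ) 1 μ
      = eLpNorm ((fun y => ‖2 * Ψ y - Φ y‖ ^ 2) + fun y => ‖Φ y‖ ^ 2) 1 μ :=
        eLpNorm_congr_norm_ae (.of_forall fun y => by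
          simp only [incoherentDensity_apply, Complex.norm_real, Pi.add_apply])
    _ ≤ eLpNorm (fun y => ‖2 * Ψ y - Φ y‖ ^ 2) 1 μ + eLpNorm (fun y => ‖Φ y‖ ^ 2) 1 μ :=
        eLpNorm_add_le (hu.norm.pow 2) (hΦ.norm.pow 2) le_rfl
    _ ≤ (2 * eLpNorm Ψ 2 μ + eLpNorm Φ 2 μ) ^ 2 + eLpNorm Φ 2 μ ^ 2 := by
        rw [eLpNorm_one_norm_sq, eLpNorm_one_norm_sq]
        gcongr
        exact eLpNorm_two_mul_sub_le one_le_two hΦ hΨ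

theorem integrable_incoherentDensity (hΦ : MemLp Φ 2 μ) (hΨ : MemLp Ψ 2 μ) :
    Integrable (incoherentDensity Φ Ψ) μ := by
  refine memLp_one_iff_integrable.mp ⟨aestronglyMeasurable_incoherentDensity hΦ.1 hΨ.1, ?_⟩
  refine (eLpNorm_incoherentDensity_le hΦ.1 hΨ.1).trans_lt ?_
  have := hΦ.eLpNorm_ne_top
  have := hΨ.eLpNorm_ne_top
  finiteness

theorem eLpNorm_incoherentDensity_sub_le (hΦ : AEStronglyMeasurable Φ μ)
    (hΨ : AEStronglyMeasurable Ψ μ) (hΞ : AEStronglyMeasurable Ξ μ) :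
    eLpNorm (incoherentDensity Φ Ψ - incoherentDensity Φ Ξ) 1 μ
      ≤ 4 * (eLpNorm Ψ 2 μ + eLpNorm Ξ 2 μ + eLpNorm Φ 2 μ) * eLpNorm (Ψ - Ξ) 2 μ := by
  set u := fun y => 2 * Ψ y - Φ y
  set v := fun y => 2 * Ξ y - Φ y
  have huv : u - v = (2 : ℂ) • (Ψ - Ξ) := by
    ext y
    simp only [u, v, Pi.sub_apply, Pi.smul_apply, smul_eq_mul]
    ring
  calc eLpNorm (incoherentDensity Φ Ψ - incoherentDensity Φ Ξ) 1 μ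
      = eLpNorm (fun y => ‖u y‖ ^ 2 - ‖v y‖ ^ 2) 1 μ :=
        eLpNorm_congr_norm_ae (.of_forall fun y => by
          simp only [Pi.sub_apply, incoherentDensity_apply, ← Complex.ofReal_sub,
            Complex.norm_real, u, v]
          ring_nf)
    _ ≤ (eLpNorm u 2 μ + eLpNorm v 2 μ) * eLpNorm (u - v) 2 μ :=
        eLpNorm_one_norm_sq_sub_norm_sq_le ((hΨ.const_mul 2).sub hΦ) ((hΞ.const_mul 2).sub hΦ)
    _ ≤ (2 * eLpNorm Ψ 2 μ + eLpNorm Φ 2 μ + (2 * eLpNorm Ξ 2 μ + eLpNorm Φ 2 μ))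
          * (2 * eLpNorm (Ψ - Ξ) 2 μ) := by
        rw [huv, eLpNorm_const_smul, show ‖(2 : ℂ)‖ₑ = 2 by simp [enorm_eq_nnnorm]]
        gcongr
        · exact eLpNorm_two_mul_sub_le one_le_two hΦ hΨ
        · exact eLpNorm_two_mul_sub_le one_le_two hΦ hΞ
    _ = 4 * (eLpNorm Ψ 2 μ + eLpNorm Ξ 2 μ + eLpNorm Φ 2 μ) * eLpNorm (Ψ - Ξ) 2 μ := by ring

end IncoherentDensity

section IncoherentMap

variable {d : ℕ} {Ω : Set (EuclideanSpace ℝ (Fin d))} {lam V Φ Ψ Ξ : EuclideanSpace ℝ (Fin d) → ℂ}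

theorem incoherentN_apply (x : EuclideanSpace ℝ (Fin d)) :
    incoherentN Ω lam V Φ Ψ x = lam x * gV Ω V (incoherentDensity Φ Ψ) x * Ψ x :=
  rfl

theorem incoherentN_sub_ae_eq_zero
    (h : lam =ᵐ[volume.restrict Ω] 0 ∨ V =ᵐ[volume] 0 ∨ Ψ =ᵐ[volume.restrict Ω] Ξ) :
    (fun x => incoherentN Ω lam V Φ Ψ x - incoherentN Ω lam V Φ Ξ x) =ᵐ[volume.restrict Ω] 0 := by
  rcases h with hlam | hV | hΨΞ
  · filter_upwards [hlam] with x hx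
    simp [incoherentN_apply, hx]
  · exact .of_forall fun x => by simp [incoherentN_apply, gV_eq_zero_of_ae_eq_zero hV]
  · have hρ : incoherentDensity Φ Ψ =ᵐ[volume.restrict Ω] incoherentDensity Φ Ξ := by
      filter_upwards [hΨΞ] with y hy
      simp [incoherentDensity, hy]
    filter_upwards [hΨΞ] with x hx
    simp [incoherentN_apply, gV_congr_ae hρ, hx]

theorem ae_enorm_incoherentN_sub_le (hV : MemLp V ∞ volume) (hΦ : MemLp Φ 2 (volume.restrict Ω))
    (hΨ : MemLp Ψ 2 (volume.restrict Ω)) (hΞ : MemLp Ξ 2 (volume.restrict Ω)) :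
    ∀ᵐ x ∂volume.restrict Ω, ‖incoherentN Ω lam V Φ Ψ x - incoherentN Ω lam V Φ Ξ x‖ₑ
      ≤ eLpNorm lam ∞ (volume.restrict Ω) * eLpNorm V ∞ volume
          * eLpNorm (incoherentDensity Φ Ψ) 1 (volume.restrict Ω) * ‖Ψ x - Ξ x‖ₑ
        + eLpNorm lam ∞ (volume.restrict Ω) * eLpNorm V ∞ volume
          * eLpNorm (incoherentDensity Φ Ψ - incoherentDensity Φ Ξ) 1 (volume.restrict Ω)
          * ‖Ξ x‖ₑ := by
  have hρΨ := integrable_incoherentDensity hΦ hΨ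
  have hρΞ := integrable_incoherentDensity hΦ hΞ
  filter_upwards [eLpNorm_exponent_top (f := lam) ▸ ae_le_eLpNormEssSup (f := lam)] with x hx
  set G₁ := gV Ω V (incoherentDensity Φ Ψ) x
  set G₂ := gV Ω V (incoherentDensity Φ Ξ) x
  have hsplit : lam x * G₁ * Ψ x - lam x * G₂ * Ξ x
      = lam x * (G₁ * (Ψ x - Ξ x) + (G₁ - G₂) * Ξ x) := by ring
  rw [incoherentN_apply, incoherentN_apply, hsplit, gV_sub hV hρΨ hρΞ]
  calc ‖lam x * (G₁ * (Ψ x - Ξ x) + gV Ω V (incoherentDensity Φ Ψ - incoherentDensity Φ Ξ) x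
        * Ξ x)‖ₑ
      ≤ ‖lam x‖ₑ * (‖G₁‖ₑ * ‖Ψ x - Ξ x‖ₑ
          + ‖gV Ω V (incoherentDensity Φ Ψ - incoherentDensity Φ Ξ) x‖ₑ * ‖Ξ x‖ₑ) := by
        rw [enorm_mul]
        gcongr
        exact (enorm_add_le _ _).trans_eq (by rw [enorm_mul, enorm_mul])
    _ ≤ eLpNorm lam ∞ (volume.restrict Ω)
          * (eLpNorm V ∞ volume * eLpNorm (incoherentDensity Φ Ψ) 1 (volume.restrict Ω)
              * ‖Ψ x - Ξ x‖ₑ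
            + eLpNorm V ∞ volume
              * eLpNorm (incoherentDensity Φ Ψ - incoherentDensity Φ Ξ) 1 (volume.restrict Ω)
              * ‖Ξ x‖ₑ) := by
        gcongr
        · exact enorm_gV_le hρΨ.1 x
        · exact enorm_gV_le (hρΨ.sub hρΞ).1 x
    _ = _ := by ring

theorem eLpNorm_incoherentN_sub_le_of_memLp (hV : MemLp V ∞ volume)
    (hΦ : MemLp Φ 2 (volume.restrict Ω)) (hΨ : MemLp Ψ 2 (volume.restrict Ω))
    (hΞ : MemLp Ξ 2 (volume.restrict Ω)) :
    eLpNorm (fun x => incoherentN Ω lam V Φ Ψ x - incoherentN Ω lam V Φ Ξ x) 2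
        (volume.restrict Ω)
      ≤ 8 * eLpNorm lam ∞ (volume.restrict Ω) * eLpNorm V ∞ volume *
          (eLpNorm Ψ 2 (volume.restrict Ω) ^ 2 + eLpNorm Ξ 2 (volume.restrict Ω) ^ 2
            + eLpNorm Φ 2 (volume.restrict Ω) ^ 2) *
          eLpNorm (Ψ - Ξ) 2 (volume.restrict Ω) := by
  set μ := volume.restrict Ω
  set K := eLpNorm lam ∞ μ * eLpNorm V ∞ volume
  set a := eLpNorm Ψ 2 μ
  set b := eLpNorm Ξ 2 μ
  set c := eLpNorm Φ 2 μ
  set δ := eLpNorm (Ψ - Ξ) 2 μ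
  calc _ ≤ K * eLpNorm (incoherentDensity Φ Ψ) 1 μ * δ
          + K * eLpNorm (incoherentDensity Φ Ψ - incoherentDensity Φ Ξ) 1 μ * b :=
        eLpNorm_le_add_of_ae_enorm_le one_le_two (hΨ.1.sub hΞ.1) hΞ.1
          (ae_enorm_incoherentN_sub_le hV hΦ hΨ hΞ)
    _ ≤ K * ((2 * a + c) ^ 2 + c ^ 2) * δ + K * (4 * (a + b + c) * δ) * b := by
        gcongr
        · exact eLpNorm_incoherentDensity_le hΦ.1 hΨ.1
        · exact eLpNorm_incoherentDensity_sub_le hΦ.1 hΨ.1 hΞ.1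
    _ = K * δ * ((2 * a + c) ^ 2 + c ^ 2 + 4 * (a + b + c) * b) := by ring
    _ ≤ K * δ * (8 * (a ^ 2 + b ^ 2 + c ^ 2)) := by
        gcongr
        exact two_mul_add_sq_add_sq_add_le a b c
    _ = _ := by ring

end IncoherentMap

theorem incoherentN_lipschitz_general {d : ℕ}
    (Ω : Set (EuclideanSpace ℝ (Fin d)))
    (lam V Φ Ψ Ξ : EuclideanSpace ℝ (Fin d) → ℂ)
    (hV : AEStronglyMeasurable V volume)
    (hΦ : AEStronglyMeasurable Φ (volume.restrict Ω))
    (hΨ : AEStronglyMeasurable Ψ (volume.restrict Ω))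
    (hΞ : AEStronglyMeasurable Ξ (volume.restrict Ω)) :
    eLpNorm (fun x => incoherentN Ω lam V Φ Ψ x - incoherentN Ω lam V Φ Ξ x) 2
        (volume.restrict Ω)
      ≤ 8 * eLpNorm lam ⊤ (volume.restrict Ω) * eLpNorm V ⊤ volume *
          (eLpNorm Ψ 2 (volume.restrict Ω) ^ 2 + eLpNorm Ξ 2 (volume.restrict Ω) ^ 2
            + eLpNorm Φ 2 (volume.restrict Ω) ^ 2) *
          eLpNorm (fun x => Ψ x - Ξ x) 2 (volume.restrict Ω) := by
  set R := 8 * eLpNorm lam ⊤ (volume.restrict Ω) * eLpNorm V ⊤ volume *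
      (eLpNorm Ψ 2 (volume.restrict Ω) ^ 2 + eLpNorm Ξ 2 (volume.restrict Ω) ^ 2
        + eLpNorm Φ 2 (volume.restrict Ω) ^ 2) *
      eLpNorm (fun x => Ψ x - Ξ x) 2 (volume.restrict Ω) with hR_def
  rcases eq_or_ne R 0 with hR0 | hR0
  · simp only [hR_def, eLpNorm_exponent_top, mul_eq_zero, OfNat.ofNat_ne_zero,
      eLpNormEssSup_eq_zero_iff, false_or, add_eq_zero, ne_eq, not_false_eq_true, pow_eq_zero_iff,
      eLpNorm_eq_zero_iff hΨ two_ne_zero, eLpNorm_eq_zero_iff hΞ two_ne_zero,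
      eLpNorm_eq_zero_iff (f := fun x => Ψ x - Ξ x) (hΨ.sub hΞ) two_ne_zero] at hR0
    refine (eLpNorm_congr_ae (incoherentN_sub_ae_eq_zero ?_)).trans_le (by simp)
    rcases hR0 with ((hlam | hV0) | ⟨⟨hΨ0, hΞ0⟩, -⟩) | hδ
    · exact .inl hlam
    · exact .inr (.inl hV0)
    · exact .inr (.inr (hΨ0.trans hΞ0.symm))
    · exact .inr (.inr (Filter.eventuallyEq_iff_sub.mpr hδ))
  rcases eq_or_ne R ⊤ with hR | hR
  · exact le_top.trans_eq hR.symm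
  simp only [hR_def, ne_eq, mul_eq_zero, not_or] at hR0 hR
  obtain ⟨hVt, hΨt, hΞt, hΦt⟩ : eLpNorm V ⊤ volume ≠ ⊤ ∧ eLpNorm Ψ 2 (volume.restrict Ω) ≠ ⊤ ∧
      eLpNorm Ξ 2 (volume.restrict Ω) ≠ ⊤ ∧ eLpNorm Φ 2 (volume.restrict Ω) ≠ ⊤ := by
    simp_all [ENNReal.mul_eq_top]
  exact eLpNorm_incoherentN_sub_le_of_memLp ⟨hV, hVt.lt_top⟩ ⟨hΦ, hΦt.lt_top⟩ ⟨hΨ, hΨt.lt_top⟩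
    ⟨hΞ, hΞt.lt_top⟩

/-- Lipschitz bound for the incoherent nonlinear map,
`‖N_Φ[Ψ] − N_Φ[Ξ]‖_{L²}
  ≤ 8 ‖λ‖_{L^∞} ‖V‖_{L^∞(ℝ^d)} (‖Ψ‖₂² + ‖Ξ‖₂² + ‖Φ‖₂²) ‖Ψ − Ξ‖₂`. -/
theorem incoherentN_lipschitz {d : ℕ}
    (Ω : Set (EuclideanSpace ℝ (Fin d))) (hΩmeas : MeasurableSet Ω)
    (hΩbdd : Bornology.IsBounded Ω)
    (lam V Φ Ψ Ξ : EuclideanSpace ℝ (Fin d) → ℂ)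
    (hlam : AEStronglyMeasurable lam (volume.restrict Ω))
    (hV : AEStronglyMeasurable V volume)
    (hΦ : AEStronglyMeasurable Φ (volume.restrict Ω))
    (hΨ : AEStronglyMeasurable Ψ (volume.restrict Ω))
    (hΞ : AEStronglyMeasurable Ξ (volume.restrict Ω)) :
    eLpNorm (fun x => incoherentN Ω lam V Φ Ψ x - incoherentN Ω lam V Φ Ξ x) 2
        (volume.restrict Ω)
      ≤ 8 * eLpNorm lam ⊤ (volume.restrict Ω) * eLpNorm V ⊤ volume *
          (eLpNorm Ψ 2 (volume.restrict Ω) ^ 2 + eLpNorm Ξ 2 (volume.restrict Ω) ^ 2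
            + eLpNorm Φ 2 (volume.restrict Ω) ^ 2) *
          eLpNorm (fun x => Ψ x - Ξ x) 2 (volume.restrict Ω) :=
  incoherentN_lipschitz_general Ω lam V Φ Ψ Ξ hV hΦ hΨ hΞ
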